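/- Let m ≥ 2 and let K ⊆ ℝ^m be a convex body. For a unit vector w ∈ S^{m−1} and t ∈ ℝ let H_{w,t} = {x ∈ ℝ^m : ⟨x, w⟩ = t}. Then: (1) whenever H_{w,t} ∩ int(K) ≠ ∅, the center of mass m(H_{w,t}) of K ∩ H_{w,t} lies in int(K); and (2) the map (w, t) ↦ m(H_{w,t}) is continuous on the set of pairs (w, t) ∈ S^{m−1} × ℝ with H_{w,t} ∩ int(K) ≠ ∅. -/

import Mathlib

open MeasureTheory Module Set RealInnerProductSpace
open scoped ENNReal NNReal

/-- The center of mass of `K ∩ H` with respect to `(m-1)`-dimensional Hausdorff measure. -/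
noncomputable def centerOfMass (m : ℕ) (K H : Set (EuclideanSpace ℝ (Fin m))) :
    EuclideanSpace ℝ (Fin m) :=
  ((μH[(m : ℝ) - 1] (K ∩ H)).toReal)⁻¹ • ∫ x in K ∩ H, x ∂(μH[(m : ℝ) - 1])

/-- The affine hyperplane `{x ∈ ℝ^m | ⟪x, w⟫ = t}`. -/
def hyperplane (m : ℕ) (w : EuclideanSpace ℝ (Fin m)) (t : ℝ) :
    Set (EuclideanSpace ℝ (Fin m)) :=
  {x | ⟪x, w⟫ = t}

variable {n : ℕ}


lemma hausdorff_le_aux (s : Set (EuclideanSpace ℝ (Fin n))) :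
    μH[(n:ℝ)] s ≤ ((n:ℝ≥0) ^ ((1:ℝ)/2) : ℝ≥0) ^ (n:ℝ) * volume ((WithLp.equiv 2 (Fin n → ℝ)) '' s) := by
  have h1 := (PiLp.antilipschitzWith_ofLp 2 (fun _ : Fin n => ℝ)).le_hausdorffMeasure_image
      (d := (n:ℝ)) (by positivity) s
  have h2 : (μH[(n:ℝ)] : Measure (Fin n → ℝ)) = volume := by
    have := MeasureTheory.hausdorffMeasure_pi_real (ι := Fin n)
    simpa using this
  rw [h2] at h1
  convert h1 using 3
  simp [ENNReal.toReal_div]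
  rfl

lemma volume_le_hausdorff_aux (s : Set (EuclideanSpace ℝ (Fin n))) :
    volume ((WithLp.equiv 2 (Fin n → ℝ)) '' s) ≤ μH[(n:ℝ)] s := by
  have h1 := (PiLp.lipschitzWith_ofLp 2 (fun _ : Fin n => ℝ)).hausdorffMeasure_image_le
      (d := (n:ℝ)) (by positivity) s
  have h2 : (μH[(n:ℝ)] : Measure (Fin n → ℝ)) = volume := by
    have := MeasureTheory.hausdorffMeasure_pi_real (ι := Fin n)
    simpa using this
  rw [h2] at h1
  simpa using h1

instance hausdorff_finiteOnCompacts (n : ℕ) :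
    IsFiniteMeasureOnCompacts (μH[(n:ℝ)] : Measure (EuclideanSpace ℝ (Fin n))) := by
  constructor
  intro s hs
  calc μH[(n:ℝ)] s ≤ _ := hausdorff_le_aux s
  _ < ∞ := by
      apply ENNReal.mul_lt_top (ENNReal.rpow_lt_top_of_nonneg (by positivity) ENNReal.coe_ne_top)
      exact (hs.image (PiLp.lipschitzWith_ofLp 2 (fun _ : Fin n => ℝ)).continuous).measure_lt_top

instance hausdorff_addLeftInvariant (n : ℕ) :
    (μH[(n:ℝ)] : Measure (EuclideanSpace ℝ (Fin n))).IsAddLeftInvariant := by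
  constructor
  intro a
  have : Measure.map (fun x => a + x) (μH[(n:ℝ)] : Measure (EuclideanSpace ℝ (Fin n))) = μH[(n:ℝ)] := by
    have hiso : Isometry (fun x : EuclideanSpace ℝ (Fin n) => a + x) :=
      Isometry.of_dist_eq (fun x y => dist_add_left a x y)
    have h := hiso.map_hausdorffMeasure (Or.inl (Nat.cast_nonneg n))
    rwa [Set.range_eq_univ.mpr (fun x => ⟨x - a, by abel⟩), Measure.restrict_univ] at h
  simpa using this

instance hausdorff_openPos (n : ℕ) :
    (μH[(n:ℝ)] : Measure (EuclideanSpace ℝ (Fin n))).IsOpenPosMeasure := by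
  constructor
  intro U hU hne
  have h1 : (0:ℝ≥0∞) < volume ((WithLp.equiv 2 (Fin n → ℝ)) '' U) := by
    have hUopen : IsOpen ((WithLp.equiv 2 (Fin n → ℝ)) '' U) := by
      have : (WithLp.equiv 2 (Fin n → ℝ)) '' U
          = (WithLp.equiv 2 (Fin n → ℝ)).symm ⁻¹' U := by
        exact (WithLp.equiv 2 (Fin n → ℝ)).image_eq_preimage_symm U
      rw [this]
      exact hU.preimage (PiLp.continuous_toLp 2 (fun _ : Fin n => ℝ))
    exact hUopen.measure_pos volume (hne.image _)
  exact (lt_of_lt_of_le h1 (volume_le_hausdorff_aux U)).ne'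

instance hausdorff_isAddHaar (n : ℕ) :
    MeasureTheory.Measure.IsAddHaarMeasure (μH[(n:ℝ)] : Measure (EuclideanSpace ℝ (Fin n))) :=
  ⟨⟩

lemma exists_chart (m n : ℕ) (hmn : m = n + 1) (w₀ : EuclideanSpace ℝ (Fin m))
    (hw₀ : w₀ ≠ 0) :
    ∃ L : EuclideanSpace ℝ (Fin n) →ₗᵢ[ℝ] EuclideanSpace ℝ (Fin m),
      ∃ P : EuclideanSpace ℝ (Fin m) →ₗ[ℝ] EuclideanSpace ℝ (Fin n),
      (∀ y, ⟪L y, w₀⟫ = 0) ∧ (∀ v : EuclideanSpace ℝ (Fin m), ⟪v, w₀⟫ = 0 → v ∈ Set.range L)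
      ∧ (∀ y, P (L y) = y)
      ∧ (∀ v : EuclideanSpace ℝ (Fin m), ⟪v, w₀⟫ = 0 → L (P v) = v) := by
  haveI : Fact (finrank ℝ (EuclideanSpace ℝ (Fin m)) = n + 1) :=
    ⟨by rw [finrank_euclideanSpace_fin, hmn]⟩
  haveI : CompleteSpace (↥(ℝ ∙ w₀)ᗮ) := inferInstance
  set B := OrthonormalBasis.fromOrthogonalSpanSingleton (𝕜 := ℝ) n hw₀ with hB
  set L := ((ℝ ∙ w₀)ᗮ).subtypeₗᵢ.comp B.repr.symm.toLinearIsometry with hLdef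
  set P : EuclideanSpace ℝ (Fin m) →ₗ[ℝ] EuclideanSpace ℝ (Fin n) :=
    (B.repr.toLinearEquiv.toLinearMap).comp
      ((Submodule.orthogonalProjection ((ℝ ∙ w₀)ᗮ)).toLinearMap) with hPdef
  have hmemL : ∀ y, (L y : EuclideanSpace ℝ (Fin m)) ∈ (ℝ ∙ w₀)ᗮ := by
    intro y
    exact (B.repr.symm y).2
  have hLv : ∀ v : ↥((ℝ ∙ w₀)ᗮ), L (B.repr v) = (v : EuclideanSpace ℝ (Fin m)) := by
    intro v
    simp [hLdef]
  refine ⟨L, P, fun y => ?_, fun v hv => ?_, fun y => ?_, fun v hv => ?_⟩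
  · have h := hmemL y
    rw [Submodule.mem_orthogonal_singleton_iff_inner_right] at h
    rw [real_inner_comm]
    exact h
  · have hv' : v ∈ (ℝ ∙ w₀)ᗮ := by
      rw [Submodule.mem_orthogonal_singleton_iff_inner_right, real_inner_comm]; exact hv
    exact ⟨B.repr ⟨v, hv'⟩, hLv ⟨v, hv'⟩⟩
  · have : P (L y) = B.repr (Submodule.orthogonalProjection ((ℝ ∙ w₀)ᗮ) (L y)) := rfl
    rw [this]
    have h2 : Submodule.orthogonalProjection ((ℝ ∙ w₀)ᗮ) (L y) = ⟨L y, hmemL y⟩ :=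
      Submodule.orthogonalProjection_mem_subspace_eq_self (⟨L y, hmemL y⟩ : ↥((ℝ ∙ w₀)ᗮ))
    rw [h2]
    have : (⟨L y, hmemL y⟩ : ↥((ℝ ∙ w₀)ᗮ)) = B.repr.symm y := by
      ext1
      simp [hLdef]
    rw [this]
    simp
  · have hv' : v ∈ (ℝ ∙ w₀)ᗮ := by
      rw [Submodule.mem_orthogonal_singleton_iff_inner_right, real_inner_comm]; exact hv
    have : P v = B.repr (Submodule.orthogonalProjection ((ℝ ∙ w₀)ᗮ) v) := rfl
    rw [this]
    have h2 : Submodule.orthogonalProjection ((ℝ ∙ w₀)ᗮ) v = ⟨v, hv'⟩ :=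
      Submodule.orthogonalProjection_mem_subspace_eq_self (⟨v, hv'⟩ : ↥((ℝ ∙ w₀)ᗮ))
    rw [h2]
    exact hLv ⟨v, hv'⟩

/-- The graph parametrization of the hyperplane `⟪·, w⟫ = t` over the orthogonal complement
of `w₀`, via the chart `L`. -/
noncomputable def graphMap {m n : ℕ} (L : EuclideanSpace ℝ (Fin n) →ₗᵢ[ℝ] EuclideanSpace ℝ (Fin m))
    (w₀ w : EuclideanSpace ℝ (Fin m)) (t : ℝ) (y : EuclideanSpace ℝ (Fin n)) :
    EuclideanSpace ℝ (Fin m) :=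
  L y + ((⟪w₀, w⟫)⁻¹ * (t - ⟪L y, w⟫)) • w₀

section Chart

variable {m n : ℕ} {L : EuclideanSpace ℝ (Fin n) →ₗᵢ[ℝ] EuclideanSpace ℝ (Fin m)}
  {w₀ w : EuclideanSpace ℝ (Fin m)} {t : ℝ}

lemma graphMap_mem (ha : ⟪w₀, w⟫ ≠ 0) (y : EuclideanSpace ℝ (Fin n)) :
    graphMap L w₀ w t y ∈ hyperplane m w t := by
  show ⟪L y + ((⟪w₀, w⟫)⁻¹ * (t - ⟪L y, w⟫)) • w₀, w⟫ = t
  rw [inner_add_left, real_inner_smul_left]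
  set a := (⟪w₀, w⟫ : ℝ)
  set b := (⟪L y, w⟫ : ℝ)
  field_simp
  ring

lemma inner_graphMap_w₀ (hL : ∀ y, ⟪L y, w₀⟫ = 0) (hw₀ : ‖w₀‖ = 1)
    (y : EuclideanSpace ℝ (Fin n)) :
    ⟪graphMap L w₀ w t y, w₀⟫ = (⟪w₀, w⟫)⁻¹ * (t - ⟪L y, w⟫) := by
  show ⟪L y + ((⟪w₀, w⟫)⁻¹ * (t - ⟪L y, w⟫)) • w₀, w₀⟫ = _
  have hww : ⟪w₀, w₀⟫ = (1:ℝ) := by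
    rw [real_inner_self_eq_norm_sq, hw₀]; norm_num
  rw [inner_add_left, real_inner_smul_left, hL y, hww, zero_add, mul_one]

lemma norm_le_graphMap (hL : ∀ y, ⟪L y, w₀⟫ = 0) (y : EuclideanSpace ℝ (Fin n)) :
    ‖y‖ ≤ ‖graphMap L w₀ w t y‖ := by
  have hG : graphMap L w₀ w t y = L y + ((⟪w₀, w⟫)⁻¹ * (t - ⟪L y, w⟫)) • w₀ := rfl
  have horth : ⟪L y, ((⟪w₀, w⟫)⁻¹ * (t - ⟪L y, w⟫)) • w₀⟫ = 0 := by
    rw [real_inner_smul_right, hL y, mul_zero]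
  have hsq := norm_add_sq_real (L y) (((⟪w₀, w⟫)⁻¹ * (t - ⟪L y, w⟫)) • w₀)
  rw [horth] at hsq
  have hLy : ‖L y‖ = ‖y‖ := L.norm_map y
  rw [hG]
  nlinarith [norm_nonneg (L y + ((⟪w₀, w⟫)⁻¹ * (t - ⟪L y, w⟫)) • w₀), norm_nonneg y,
    sq_nonneg ‖((⟪w₀, w⟫)⁻¹ * (t - ⟪L y, w⟫)) • w₀‖]

lemma graphMap_inj (hL : ∀ y, ⟪L y, w₀⟫ = 0) (hw₀ : ‖w₀‖ = 1)
    {y y' : EuclideanSpace ℝ (Fin n)}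
    (h : graphMap L w₀ w t y = graphMap L w₀ w t y') : y = y' := by
  have h1 := inner_graphMap_w₀ (w := w) (t := t) hL hw₀ y
  have h1' := inner_graphMap_w₀ (w := w) (t := t) hL hw₀ y'
  have hcoef : (⟪w₀, w⟫)⁻¹ * (t - ⟪L y, w⟫) = (⟪w₀, w⟫)⁻¹ * (t - ⟪L y', w⟫) := by
    rw [← h1, ← h1', h]
  have hG : L y + ((⟪w₀, w⟫)⁻¹ * (t - ⟪L y, w⟫)) • w₀
      = L y' + ((⟪w₀, w⟫)⁻¹ * (t - ⟪L y', w⟫)) • w₀ := h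
  rw [hcoef] at hG
  exact L.injective (add_right_cancel hG)

lemma graphMap_surj (hL : ∀ y, ⟪L y, w₀⟫ = 0)
    (hLr : ∀ v : EuclideanSpace ℝ (Fin m), ⟪v, w₀⟫ = 0 → v ∈ Set.range L)
    (hw₀ : ‖w₀‖ = 1) (ha : ⟪w₀, w⟫ ≠ 0) {x : EuclideanSpace ℝ (Fin m)}
    (hx : x ∈ hyperplane m w t) : ∃ y, graphMap L w₀ w t y = x := by
  have hww : ⟪w₀, w₀⟫ = (1:ℝ) := by
    rw [real_inner_self_eq_norm_sq, hw₀]; norm_num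
  set c : ℝ := ⟪x, w₀⟫ with hc
  have hv : ⟪x - c • w₀, w₀⟫ = 0 := by
    rw [inner_sub_left, real_inner_smul_left, hww, mul_one, sub_self]
  obtain ⟨y, hy⟩ := hLr (x - c • w₀) hv
  refine ⟨y, ?_⟩
  have hxw : ⟪x, w⟫ = t := hx
  have hyw : ⟪L y, w⟫ = t - c * ⟪w₀, w⟫ := by
    rw [hy, inner_sub_left, real_inner_smul_left, hxw]
  have hG : graphMap L w₀ w t y = L y + ((⟪w₀, w⟫)⁻¹ * (t - ⟪L y, w⟫)) • w₀ := rfl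
  rw [hG, hyw, hy]
  have hcoef : (⟪w₀, w⟫)⁻¹ * (t - (t - c * ⟪w₀, w⟫)) = c := by
    rw [sub_sub_cancel, mul_comm c, ← mul_assoc, inv_mul_cancel₀ ha, one_mul]
  rw [hcoef]
  abel

lemma graphMap_range (hL : ∀ y, ⟪L y, w₀⟫ = 0)
    (hLr : ∀ v : EuclideanSpace ℝ (Fin m), ⟪v, w₀⟫ = 0 → v ∈ Set.range L)
    (hw₀ : ‖w₀‖ = 1) (ha : ⟪w₀, w⟫ ≠ 0) :
    Set.range (graphMap L w₀ w t) = hyperplane m w t := by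
  apply Set.Subset.antisymm
  · rintro _ ⟨y, rfl⟩; exact graphMap_mem ha y
  · intro x hx
    obtain ⟨y, hy⟩ := graphMap_surj hL hLr hw₀ ha hx
    exact ⟨y, hy⟩

lemma graphMap_combo (a b : ℝ) (hab : a + b = 1) (y y' : EuclideanSpace ℝ (Fin n)) :
    graphMap L w₀ w t (a • y + b • y') = a • graphMap L w₀ w t y + b • graphMap L w₀ w t y' := by
  have hG : ∀ z, graphMap L w₀ w t z = L z + ((⟪w₀, w⟫)⁻¹ * (t - ⟪L z, w⟫)) • w₀ := fun _ => rfl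
  simp only [hG, map_add, _root_.map_smul, inner_add_left, real_inner_smul_left]
  rw [show a • (L y + ((⟪w₀, w⟫)⁻¹ * (t - ⟪L y, w⟫)) • w₀)
      + b • (L y' + ((⟪w₀, w⟫)⁻¹ * (t - ⟪L y', w⟫)) • w₀)
      = (a • L y + b • L y') + ((a * ((⟪w₀, w⟫)⁻¹ * (t - ⟪L y, w⟫))
        + b * ((⟪w₀, w⟫)⁻¹ * (t - ⟪L y', w⟫))) • w₀) by
    rw [smul_add, smul_add, add_smul, smul_smul, smul_smul]; abel]
  congr 2
  linear_combination (-(⟪w₀, w⟫)⁻¹ * t) * hab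

lemma graphMap_continuous :
    Continuous (graphMap L w₀ w t) := by
  have : Continuous fun y : EuclideanSpace ℝ (Fin n) => (⟪L y, w⟫ : ℝ) :=
    (L.continuous.inner continuous_const)
  exact (L.continuous.add (((continuous_const.mul (continuous_const.sub this))).smul
    continuous_const))

end Chart

section Formula

variable {m n : ℕ} {L : EuclideanSpace ℝ (Fin n) →ₗᵢ[ℝ] EuclideanSpace ℝ (Fin m)}
  {w₀ w : EuclideanSpace ℝ (Fin m)} {t : ℝ}

/-- The linear part of the graph map. -/
noncomputable def graphLin (L : EuclideanSpace ℝ (Fin n) →ₗᵢ[ℝ] EuclideanSpace ℝ (Fin m))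
    (w₀ w : EuclideanSpace ℝ (Fin m)) : EuclideanSpace ℝ (Fin n) →ₗ[ℝ] EuclideanSpace ℝ (Fin m) where
  toFun := fun y => L y - ((⟪w₀, w⟫)⁻¹ * ⟪L y, w⟫) • w₀
  map_add' := by
    intro y y'
    simp only [map_add, inner_add_left, mul_add, add_smul]
    abel
  map_smul' := by
    intro c y
    simp only [_root_.map_smul, real_inner_smul_left, RingHom.id_apply, smul_sub]
    rw [smul_smul]
    ring_nf

lemma graphMap_eq_lin (y : EuclideanSpace ℝ (Fin n)) :
    graphMap L w₀ w t y = graphLin L w₀ w y + ((⟪w₀, w⟫)⁻¹ * t) • w₀ := by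
  show L y + ((⟪w₀, w⟫)⁻¹ * (t - ⟪L y, w⟫)) • w₀
      = (L y - ((⟪w₀, w⟫)⁻¹ * ⟪L y, w⟫) • w₀) + ((⟪w₀, w⟫)⁻¹ * t) • w₀
  rw [mul_sub, sub_smul]
  abel

end Formula

lemma orth_inner_graphLin {m n : ℕ} (L : EuclideanSpace ℝ (Fin n) →ₗᵢ[ℝ] EuclideanSpace ℝ (Fin m))
    (w₀ w : EuclideanSpace ℝ (Fin m)) (ha : ⟪w₀, w⟫ ≠ 0) (y : EuclideanSpace ℝ (Fin n)) :
    ⟪graphLin L w₀ w y, w⟫ = 0 := by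
  show ⟪L y - ((⟪w₀, w⟫)⁻¹ * ⟪L y, w⟫) • w₀, w⟫ = 0
  rw [inner_sub_left, real_inner_smul_left, mul_comm (⟪w₀, w⟫)⁻¹ _, mul_assoc,
    inv_mul_cancel₀ ha, mul_one, sub_self]

lemma hyperplane_measure_eq (m n : ℕ) (hmn : m = n + 1)
    (L : EuclideanSpace ℝ (Fin n) →ₗᵢ[ℝ] EuclideanSpace ℝ (Fin m))
    (w₀ w : EuclideanSpace ℝ (Fin m)) (t : ℝ)
    (hL : ∀ y, ⟪L y, w₀⟫ = 0)
    (hLr : ∀ v : EuclideanSpace ℝ (Fin m), ⟪v, w₀⟫ = 0 → v ∈ Set.range L)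
    (hw₀ : ‖w₀‖ = 1) (hw : ‖w‖ = 1) (ha : ⟪w₀, w⟫ ≠ 0) :
    ∃ κ : ℝ≥0∞, κ ≠ 0 ∧ κ ≠ ∞ ∧ ∀ s : Set (EuclideanSpace ℝ (Fin m)), MeasurableSet s →
      μH[(n:ℝ)] (s ∩ hyperplane m w t)
        = κ * μH[(n:ℝ)] (graphMap L w₀ w t ⁻¹' s) := by
  have hwne : w ≠ 0 := by
    intro h; rw [h, norm_zero] at hw; exact one_ne_zero hw.symm
  have hww : ⟪w, w⟫ = (1:ℝ) := by
    rw [real_inner_self_eq_norm_sq, hw]; norm_num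
  obtain ⟨Lw, Pw, hLw, hLwr, hPw1, hPw2⟩ := exists_chart m n hmn w hwne
  set G := graphMap L w₀ w t with hGdef
  set ψ : EuclideanSpace ℝ (Fin n) → EuclideanSpace ℝ (Fin m) :=
    fun y => t • w + Lw y with hψdef
  have hψ : Isometry ψ := by
    apply Isometry.of_dist_eq
    intro y y'
    have : dist (ψ y) (ψ y') = dist (Lw y) (Lw y') := dist_add_left _ _ _
    rw [this, Lw.isometry.dist_eq]
  have hψmem : ∀ y, ψ y ∈ hyperplane m w t := by
    intro y
    show ⟪t • w + Lw y, w⟫ = t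
    rw [inner_add_left, real_inner_smul_left, hww, hLw y, mul_one, add_zero]
  have hψrange : Set.range ψ = hyperplane m w t := by
    apply Set.Subset.antisymm
    · rintro _ ⟨y, rfl⟩; exact hψmem y
    · intro x hx
      have hx' : ⟪x, w⟫ = t := hx
      have hv : ⟪x - t • w, w⟫ = 0 := by
        rw [inner_sub_left, real_inner_smul_left, hww, hx', mul_one, sub_self]
      obtain ⟨y, hy⟩ := hLwr (x - t • w) hv
      exact ⟨y, by simp [hψdef, hy]⟩
  set Tlin : EuclideanSpace ℝ (Fin n) →ₗ[ℝ] EuclideanSpace ℝ (Fin n) :=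
    Pw.comp (graphLin L w₀ w) with hTdef
  set cc : EuclideanSpace ℝ (Fin n) := Pw (((⟪w₀, w⟫)⁻¹ * t) • w₀ - t • w) with hccdef
  set T : EuclideanSpace ℝ (Fin n) → EuclideanSpace ℝ (Fin n) := fun y => Tlin y + cc with hTfdef
  have hg₀ : ⟪((⟪w₀, w⟫)⁻¹ * t) • w₀ - t • w, w⟫ = 0 := by
    rw [inner_sub_left, real_inner_smul_left, real_inner_smul_left, hww,
      mul_comm (⟪w₀, w⟫)⁻¹ t, mul_assoc, inv_mul_cancel₀ ha, mul_one, sub_self]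
  have hψT : ∀ y, ψ (T y) = G y := by
    intro y
    show t • w + Lw (Tlin y + cc) = G y
    rw [map_add]
    have h1 : Lw (Tlin y) = graphLin L w₀ w y :=
      hPw2 _ (orth_inner_graphLin L w₀ w ha y)
    have h2 : Lw cc = ((⟪w₀, w⟫)⁻¹ * t) • w₀ - t • w := hPw2 _ hg₀
    rw [h1, h2, hGdef, graphMap_eq_lin]
    abel
  have hGinj : Function.Injective G := fun y y' h => graphMap_inj hL hw₀ h
  have hTinj : Function.Injective T := by
    intro y y' h
    apply hGinj
    rw [← hψT, ← hψT, h]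
  have hTsurj : Function.Surjective T := by
    intro z
    obtain ⟨y, hy⟩ := graphMap_surj hL hLr hw₀ ha (hψmem z)
    refine ⟨y, hψ.injective ?_⟩
    rw [hψT]
    exact hy
  have hTlininj : Function.Injective Tlin := by
    intro y y' h
    apply hTinj
    show Tlin y + cc = Tlin y' + cc
    rw [h]
  have hTlinsurj : Function.Surjective Tlin := by
    intro z
    obtain ⟨y, hy⟩ := hTsurj (z + cc)
    exact ⟨y, by have : Tlin y + cc = z + cc := hy; exact add_right_cancel this⟩
  have hdet : LinearMap.det Tlin ≠ 0 := by
    have h := (LinearEquiv.isUnit_det'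
      (LinearEquiv.ofBijective Tlin ⟨hTlininj, hTlinsurj⟩)).ne_zero
    exact h
  refine ⟨ENNReal.ofReal |LinearMap.det Tlin|, ?_, ENNReal.ofReal_ne_top, ?_⟩
  · simp only [ne_eq, ENNReal.ofReal_eq_zero, not_le]
    exact abs_pos.mpr hdet
  intro s hs
  have h1 : s ∩ hyperplane m w t = ψ '' (ψ ⁻¹' s) := by
    rw [Set.image_preimage_eq_inter_range, hψrange, Set.inter_comm]
  rw [h1, hψ.hausdorffMeasure_image (Or.inl (Nat.cast_nonneg n))]
  have h2 : ψ ⁻¹' s = T '' (G ⁻¹' s) := by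
    apply Set.Subset.antisymm
    · intro z hz
      obtain ⟨y, hy⟩ := graphMap_surj hL hLr hw₀ ha (hψmem z)
      have hGy : G y = ψ z := hy
      have hTz : T y = z := hψ.injective (by rw [hψT, hGy])
      refine ⟨y, ?_, hTz⟩
      rw [Set.mem_preimage, hGy]
      exact hz
    · rintro _ ⟨y, hy, rfl⟩
      rw [Set.mem_preimage, hψT]
      exact hy
  rw [h2]
  have h3 : T '' (G ⁻¹' s) = (fun u => u + cc) '' (Tlin '' (G ⁻¹' s)) := by
    rw [Set.image_image]
  rw [h3]
  have h4 : (fun u : EuclideanSpace ℝ (Fin n) => u + cc) '' (Tlin '' (G ⁻¹' s))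
      = (fun u : EuclideanSpace ℝ (Fin n) => cc + u) '' (Tlin '' (G ⁻¹' s)) := by
    simp [add_comm]
  rw [h4, Set.image_add_left, measure_preimage_add]
  exact MeasureTheory.Measure.addHaar_image_linearMap _ Tlin _

lemma hyperplane_measurableSet (m : ℕ) (w : EuclideanSpace ℝ (Fin m)) (t : ℝ) :
    MeasurableSet (hyperplane m w t) := by
  have : IsClosed (hyperplane m w t) :=
    isClosed_eq (continuous_id.inner continuous_const) continuous_const
  exact this.measurableSet

lemma centerOfMass_eq_graph (m n : ℕ) (hmn : m = n + 1)
    (K : Set (EuclideanSpace ℝ (Fin m))) (hK : MeasurableSet K)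
    (L : EuclideanSpace ℝ (Fin n) →ₗᵢ[ℝ] EuclideanSpace ℝ (Fin m))
    (w₀ w : EuclideanSpace ℝ (Fin m)) (t : ℝ)
    (hL : ∀ y, ⟪L y, w₀⟫ = 0)
    (hLr : ∀ v : EuclideanSpace ℝ (Fin m), ⟪v, w₀⟫ = 0 → v ∈ Set.range L)
    (hw₀ : ‖w₀‖ = 1) (hw : ‖w‖ = 1) (ha : ⟪w₀, w⟫ ≠ 0) :
    centerOfMass m K (hyperplane m w t)
      = ((μH[(n:ℝ)] (graphMap L w₀ w t ⁻¹' K)).toReal)⁻¹ •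
        ∫ y in graphMap L w₀ w t ⁻¹' K, graphMap L w₀ w t y
          ∂(μH[(n:ℝ)] : Measure (EuclideanSpace ℝ (Fin n))) := by
  have hd : ((m:ℝ) - 1) = (n:ℝ) := by subst hmn; push_cast; ring
  have hμE : (μH[(m:ℝ)-1] : Measure (EuclideanSpace ℝ (Fin m))) = μH[(n:ℝ)] := by rw [hd]
  obtain ⟨κ, hκ0, hκtop, hκ⟩ := hyperplane_measure_eq m n hmn L w₀ w t hL hLr hw₀ hw ha
  set G := graphMap L w₀ w t with hGdef
  have hGcont : Continuous G := graphMap_continuous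
  have hGmeas : Measurable G := hGcont.measurable
  have hκr : κ.toReal ≠ 0 := ENNReal.toReal_ne_zero.mpr ⟨hκ0, hκtop⟩
  have ρ : ((μH[(n:ℝ)] : Measure (EuclideanSpace ℝ (Fin m))).restrict (K ∩ hyperplane m w t))
      = κ • Measure.map G ((μH[(n:ℝ)] : Measure (EuclideanSpace ℝ (Fin n))).restrict (G ⁻¹' K)) := by
    apply Measure.ext
    intro s hs
    rw [Measure.restrict_apply hs]
    have h1 : s ∩ (K ∩ hyperplane m w t) = (s ∩ K) ∩ hyperplane m w t := by
      rw [Set.inter_assoc]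
    rw [h1, hκ _ (hs.inter hK), Measure.smul_apply,
      Measure.map_apply hGmeas hs, Measure.restrict_apply (hGmeas hs),
      Set.preimage_inter, smul_eq_mul]
  show ((μH[(m:ℝ)-1] (K ∩ hyperplane m w t)).toReal)⁻¹
      • ∫ x in K ∩ hyperplane m w t, x ∂(μH[(m:ℝ)-1]) = _
  rw [hμE, hκ K hK]
  have hint : (∫ x in K ∩ hyperplane m w t, x
        ∂(μH[(n:ℝ)] : Measure (EuclideanSpace ℝ (Fin m))))
      = κ.toReal • ∫ y in G ⁻¹' K, G y ∂(μH[(n:ℝ)] : Measure (EuclideanSpace ℝ (Fin n))) := by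
    rw [show ((μH[(n:ℝ)] : Measure (EuclideanSpace ℝ (Fin m))).restrict (K ∩ hyperplane m w t))
      = _ from ρ]
    rw [integral_smul_measure]
    congr 1
    exact integral_map hGmeas.aemeasurable aestronglyMeasurable_id
  rw [hint, ENNReal.toReal_mul, smul_smul]
  congr 1
  rw [mul_inv, mul_comm (κ.toReal)⁻¹ _, mul_assoc, inv_mul_cancel₀ hκr, mul_one]

lemma convex_subset_closure_interior {m : ℕ} {K : Set (EuclideanSpace ℝ (Fin m))}
    (hKconv : Convex ℝ K) {x₀ : EuclideanSpace ℝ (Fin m)} (hx₀ : x₀ ∈ interior K) :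
    K ⊆ closure (interior K) := by
  intro z hz
  have hcomb : ∀ θ : ℝ, 0 < θ → θ ≤ 1 → θ • x₀ + (1 - θ) • z ∈ interior K := by
    intro θ hθ hθ1
    exact hKconv.combo_interior_closure_mem_interior hx₀ (subset_closure hz) hθ
      (by linarith) (by ring)
  have htend : Filter.Tendsto (fun θ : ℝ => θ • x₀ + (1 - θ) • z) (nhdsWithin 0 (Set.Ioi 0))
      (nhds z) := by
    have hcont : Continuous (fun θ : ℝ => θ • x₀ + (1 - θ) • z) := by
      continuity
    have := hcont.tendsto 0
    simp only [zero_smul, sub_zero, one_smul, zero_add] at this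
    exact this.mono_left nhdsWithin_le_nhds
  apply mem_closure_of_tendsto htend
  filter_upwards [Ioc_mem_nhdsGT_of_mem (Set.mem_Ico.mpr ⟨le_refl (0:ℝ), one_pos⟩)] with θ hθ
  exact hcomb θ hθ.1 hθ.2

lemma part1 (m n : ℕ) (hmn : m = n + 1) (K : Set (EuclideanSpace ℝ (Fin m)))
    (hKcomp : IsCompact K) (hKconv : Convex ℝ K)
    (w : EuclideanSpace ℝ (Fin m)) (t : ℝ) (hw : ‖w‖ = 1)
    (hne : (hyperplane m w t ∩ interior K).Nonempty) :
    centerOfMass m K (hyperplane m w t) ∈ interior K := by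
  have hwne : w ≠ 0 := by
    intro h; rw [h, norm_zero] at hw; exact one_ne_zero hw.symm
  have ha : ⟪w, w⟫ ≠ 0 := by
    rw [real_inner_self_eq_norm_sq, hw]; norm_num
  have hKmeas : MeasurableSet K := hKcomp.measurableSet
  obtain ⟨L, P, hL, hLr, hP1, hP2⟩ := exists_chart m n hmn w hwne
  set μF := (μH[(n:ℝ)] : Measure (EuclideanSpace ℝ (Fin n))) with hμF
  set G := graphMap L w w t with hGdef
  have hGcont : Continuous G := graphMap_continuous
  set D := G ⁻¹' K with hDdef
  have hDmeas : MeasurableSet D := hKmeas.preimage hGcont.measurable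
  have hDconv : Convex ℝ D := by
    intro y hy y' hy' a b hanneg hb hab
    show G (a • y + b • y') ∈ K
    rw [hGdef, graphMap_combo a b hab]
    exact hKconv hy hy' hanneg hb hab
  have hDclosed : IsClosed D := hKcomp.isClosed.preimage hGcont
  obtain ⟨R, hRsub⟩ := hKcomp.isBounded.subset_closedBall 0
  have hDbdd : Bornology.IsBounded D := by
    apply Bornology.IsBounded.subset (Metric.isBounded_closedBall (x := (0 : EuclideanSpace ℝ (Fin n))) (r := R))
    intro y hy
    rw [Metric.mem_closedBall, dist_zero_right]
    calc ‖y‖ ≤ ‖G y‖ := norm_le_graphMap hL y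
    _ ≤ R := by
        have := hRsub hy
        rwa [Metric.mem_closedBall, dist_zero_right] at this
  have hDcomp : IsCompact D := Metric.isCompact_of_isClosed_isBounded hDclosed hDbdd
  obtain ⟨x₀, hx₀H, hx₀int⟩ := hne
  obtain ⟨p, hp⟩ := graphMap_surj hL hLr hw ha hx₀H
  have hGp : G p ∈ interior K := by rw [hGdef, hp]; exact hx₀int
  have hopen : IsOpen (G ⁻¹' interior K) := isOpen_interior.preimage hGcont
  have hDsub : G ⁻¹' interior K ⊆ D := Set.preimage_mono interior_subset
  have hμDpos : 0 < μF D :=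
    lt_of_lt_of_le (hopen.measure_pos μF ⟨p, hGp⟩) (measure_mono hDsub)
  have hμDfin : μF D < ⊤ := hDcomp.measure_lt_top
  have hApos : 0 < (μF D).toReal := ENNReal.toReal_pos hμDpos.ne' hμDfin.ne
  have hGint : IntegrableOn G D μF := hGcont.continuousOn.integrableOn_compact hDcomp
  rw [centerOfMass_eq_graph m n hmn K hKmeas L w w t hL hLr hw hw ha]
  set A := (μF D).toReal with hAdef
  set b := A⁻¹ • ∫ y in D, G y ∂μF with hbdef
  show b ∈ interior K
  by_contra hb
  obtain ⟨f, hf⟩ := geometric_hahn_banach_open_point (hKconv.interior) isOpen_interior hb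
  have hle : ∀ y ∈ D, f (G y) ≤ f b := by
    intro y hy
    have h1 : G y ∈ closure (interior K) := convex_subset_closure_interior hKconv hx₀int hy
    have h2 : closure (interior K) ⊆ {z | f z ≤ f b} := by
      apply closure_minimal
      · intro z hz; exact (hf z hz).le
      · exact isClosed_le f.continuous continuous_const
    exact h2 h1
  have hintD : ∫ y in D, G y ∂μF = A • b := by
    rw [hbdef, smul_smul, mul_inv_cancel₀ hApos.ne', one_smul]
  have hfG : IntegrableOn (fun y => f (G y)) D μF :=
    (f.continuous.comp hGcont).continuousOn.integrableOn_compact hDcomp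
  have h2 : ∫ y in D, f (G y) ∂μF = A * f b := by
    rw [ContinuousLinearMap.integral_comp_comm f hGint, hintD]
    simp
  have h3 : ∫ y in D, (f b - f (G y)) ∂μF = 0 := by
    rw [integral_sub ((integrableOn_const_iff (C := f b)).mpr (Or.inr hμDfin)) hfG, setIntegral_const, h2]
    simp [hAdef, Measure.real]
  have h4 : 0 < ∫ y in D, (f b - f (G y)) ∂μF := by
    rw [setIntegral_pos_iff_support_of_nonneg_ae]
    · apply lt_of_lt_of_le (hopen.measure_pos μF ⟨p, hGp⟩)
      apply measure_mono
      intro y hy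
      constructor
      · have : f (G y) < f b := hf _ hy
        simp only [Function.mem_support]
        intro hzero
        rw [sub_eq_zero] at hzero
        exact absurd hzero.symm (ne_of_lt this)
      · exact hDsub hy
    · rw [Filter.EventuallyLE, ae_restrict_iff' hDmeas]
      filter_upwards with y hy
      simpa using sub_nonneg.mpr (hle y hy)
    · exact ((integrableOn_const_iff).mpr (Or.inr hμDfin)).sub hfG
  rw [h3] at h4
  exact lt_irrefl 0 h4

lemma graphMap_image_interior {m n : ℕ} {L : EuclideanSpace ℝ (Fin n) →ₗᵢ[ℝ] EuclideanSpace ℝ (Fin m)}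
    {w₀ w : EuclideanSpace ℝ (Fin m)} {t : ℝ} {K : Set (EuclideanSpace ℝ (Fin m))}
    (hKconv : Convex ℝ K) {p y : EuclideanSpace ℝ (Fin n)}
    (hp : graphMap L w₀ w t p ∈ interior K)
    (hy : y ∈ interior (graphMap L w₀ w t ⁻¹' K)) :
    graphMap L w₀ w t y ∈ interior K := by
  set G := graphMap L w₀ w t with hGdef
  have hcont : Continuous (fun ε : ℝ => y + ε • (y - p)) := by continuity
  have hy0 : (fun ε : ℝ => y + ε • (y - p)) 0 ∈ interior (G ⁻¹' K) := by
    simpa using hy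
  have hev : ∀ᶠ ε in nhds (0:ℝ), y + ε • (y - p) ∈ interior (G ⁻¹' K) :=
    (hcont.tendsto 0).eventually (isOpen_interior.mem_nhds hy0)
  have hev' : ∀ᶠ ε in nhdsWithin (0:ℝ) (Set.Ioi 0), y + ε • (y - p) ∈ interior (G ⁻¹' K)
      ∧ ε ∈ Set.Ioi (0:ℝ) :=
    (hev.filter_mono nhdsWithin_le_nhds).and (eventually_mem_nhdsWithin)
  obtain ⟨ε, hεmem, hεpos⟩ := hev'.exists
  have hεpos : (0:ℝ) < ε := hεpos
  have h1ε : (1:ℝ) + ε ≠ 0 := by positivity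
  set z := y + ε • (y - p) with hzdef
  have hzK : z ∈ G ⁻¹' K := interior_subset hεmem
  have hcombo : (ε/(1+ε)) • p + (1/(1+ε)) • z = y := by
    rw [hzdef]
    match_scalars <;> field_simp <;> ring
  have hab : (ε/(1+ε)) + (1/(1+ε)) = 1 := by field_simp; ring
  have : G y = (ε/(1+ε)) • G p + (1/(1+ε)) • G z := by
    rw [← hcombo, hGdef, graphMap_combo _ _ hab]
  rw [this]
  exact hKconv.combo_interior_closure_mem_interior hp (subset_closure hzK)
    (by positivity) (by positivity) hab

lemma part2 (m n : ℕ) (hmn : m = n + 1) (K : Set (EuclideanSpace ℝ (Fin m)))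
    (hKcomp : IsCompact K) (hKconv : Convex ℝ K) :
    ContinuousOn (fun p : EuclideanSpace ℝ (Fin m) × ℝ =>
        centerOfMass m K (hyperplane m p.1 p.2))
      {p : EuclideanSpace ℝ (Fin m) × ℝ |
        p.1 ∈ Metric.sphere (0 : EuclideanSpace ℝ (Fin m)) 1 ∧
        (hyperplane m p.1 p.2 ∩ interior K).Nonempty} := by
  set S := {p : EuclideanSpace ℝ (Fin m) × ℝ |
      p.1 ∈ Metric.sphere (0 : EuclideanSpace ℝ (Fin m)) 1 ∧
      (hyperplane m p.1 p.2 ∩ interior K).Nonempty} with hSdef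
  intro p₀ hp₀
  obtain ⟨hp₀sphere, hp₀ne⟩ := hp₀
  set w₀ := p₀.1 with hw₀def
  set t₀ := p₀.2 with ht₀def
  have hw₀ : ‖w₀‖ = 1 := mem_sphere_zero_iff_norm.mp hp₀sphere
  have hw₀ne : w₀ ≠ 0 := by
    intro h; rw [h, norm_zero] at hw₀; exact one_ne_zero hw₀.symm
  have ha₀ : ⟪w₀, w₀⟫ = (1:ℝ) := by
    rw [real_inner_self_eq_norm_sq, hw₀]; norm_num
  have hKmeas : MeasurableSet K := hKcomp.measurableSet
  obtain ⟨L, P, hL, hLr, hP1, hP2⟩ := exists_chart m n hmn w₀ hw₀ne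
  set μF := (μH[(n:ℝ)] : Measure (EuclideanSpace ℝ (Fin n))) with hμF
  -- the family of graph maps
  set Gf : EuclideanSpace ℝ (Fin m) × ℝ → EuclideanSpace ℝ (Fin n) → EuclideanSpace ℝ (Fin m) :=
    fun p y => graphMap L w₀ p.1 p.2 y with hGfdef
  have hGfcont : ∀ p, Continuous (Gf p) := fun p => graphMap_continuous
  have hGfmeas : ∀ p, Measurable (Gf p) := fun p => (hGfcont p).measurable
  -- joint continuity in `p` at `p₀`
  have hjoint : ∀ y, ContinuousAt (fun p : EuclideanSpace ℝ (Fin m) × ℝ => Gf p y) p₀ := by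
    intro y
    have h1 : ContinuousAt (fun p : EuclideanSpace ℝ (Fin m) × ℝ => (⟪w₀, p.1⟫ : ℝ)) p₀ :=
      (continuous_const.inner continuous_fst).continuousAt
    have h2 : ContinuousAt (fun p : EuclideanSpace ℝ (Fin m) × ℝ => (⟪L y, p.1⟫ : ℝ)) p₀ :=
      (continuous_const.inner continuous_fst).continuousAt
    have h3 : ContinuousAt (fun p : EuclideanSpace ℝ (Fin m) × ℝ => (⟪w₀, p.1⟫ : ℝ)⁻¹) p₀ :=
      h1.inv₀ (by rw [← hw₀def]; show (⟪w₀, w₀⟫ : ℝ) ≠ 0; rw [ha₀]; norm_num)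
    exact continuousAt_const.add (((h3.mul ((continuousAt_snd).sub h2)).smul
      continuousAt_const))
  -- bound
  obtain ⟨R, hRsub⟩ := hKcomp.isBounded.subset_closedBall 0
  have hinK_norm : ∀ x ∈ K, ‖x‖ ≤ R := by
    intro x hx
    have := hRsub hx
    rwa [Metric.mem_closedBall, dist_zero_right] at this
  obtain ⟨x₀, hx₀H, hx₀int⟩ := hp₀ne
  have hR0 : 0 ≤ R := le_trans (norm_nonneg x₀) (hinK_norm _ (interior_subset hx₀int))
  have hBallcomp : IsCompact (Metric.closedBall (0 : EuclideanSpace ℝ (Fin n)) R) :=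
    isCompact_closedBall _ _
  have hBallmeas : MeasurableSet (Metric.closedBall (0 : EuclideanSpace ℝ (Fin n)) R) :=
    measurableSet_closedBall
  have hmemball : ∀ (p : EuclideanSpace ℝ (Fin m) × ℝ) y, Gf p y ∈ K →
      y ∈ Metric.closedBall (0 : EuclideanSpace ℝ (Fin n)) R := by
    intro p y hy
    rw [Metric.mem_closedBall, dist_zero_right]
    calc ‖y‖ ≤ ‖Gf p y‖ := norm_le_graphMap hL y
    _ ≤ R := hinK_norm _ hy
  -- a.e. continuity of the indicator integrands
  set G₀ := Gf p₀ with hG₀def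
  set D₀ := G₀ ⁻¹' K with hD₀def
  have hD₀conv : Convex ℝ D₀ := by
    intro y hy y' hy' a b hanneg hb hab
    show graphMap L w₀ p₀.1 p₀.2 (a • y + b • y') ∈ K
    rw [graphMap_combo a b hab]
    exact hKconv hy hy' hanneg hb hab
  have hD₀closed : IsClosed D₀ := hKcomp.isClosed.preimage (hGfcont p₀)
  have hfrnull : μF (frontier D₀) = 0 := hD₀conv.addHaar_frontier μF
  have hsub : {y | G₀ y ∈ frontier K} ⊆ frontier D₀ := by
    intro y hy
    have hyfr : G₀ y ∈ frontier K := hy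
    have hyK : G₀ y ∈ K := by
      have h1 : G₀ y ∈ closure K := frontier_subset_closure hyfr
      rwa [hKcomp.isClosed.closure_eq] at h1
    rw [hD₀closed.frontier_eq]
    refine ⟨hyK, ?_⟩
    intro hyint
    obtain ⟨q, hq⟩ := graphMap_surj hL hLr hw₀
      (by rw [ha₀]; norm_num : (⟪w₀, w₀⟫ : ℝ) ≠ 0) hx₀H
    have hGq : G₀ q ∈ interior K := by
      show graphMap L w₀ p₀.1 p₀.2 q ∈ interior K
      rw [hq]; exact hx₀int
    have := graphMap_image_interior hKconv hGq hyint
    exact hyfr.2 this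
  have hae : ∀ᵐ y ∂μF, G₀ y ∉ frontier K := by
    have h0 : μF {y | G₀ y ∈ frontier K} = 0 := measure_mono_null hsub hfrnull
    rw [MeasureTheory.ae_iff]
    convert h0 using 2
    ext y
    simp
  -- continuity of the numerator and denominator integrals
  set Af : EuclideanSpace ℝ (Fin m) × ℝ → ℝ :=
    fun p => ∫ y, Set.indicator K (fun _ => (1:ℝ)) (Gf p y) ∂μF with hAfdef
  set If : EuclideanSpace ℝ (Fin m) × ℝ → EuclideanSpace ℝ (Fin m) :=
    fun p => ∫ y, Set.indicator K id (Gf p y) ∂μF with hIfdef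
  have hboundInt : Integrable
      (Set.indicator (Metric.closedBall (0 : EuclideanSpace ℝ (Fin n)) R) (fun _ => R)) μF :=
    ((integrableOn_const_iff).mpr (Or.inr hBallcomp.measure_lt_top)).integrable_indicator hBallmeas
  have hbound1Int : Integrable
      (Set.indicator (Metric.closedBall (0 : EuclideanSpace ℝ (Fin n)) R) (fun _ => (1:ℝ))) μF :=
    ((integrableOn_const_iff).mpr (Or.inr hBallcomp.measure_lt_top)).integrable_indicator hBallmeas
  have hAcont : ContinuousAt Af p₀ := by
    apply continuousAt_of_dominated (bound := Set.indicator
        (Metric.closedBall (0 : EuclideanSpace ℝ (Fin n)) R) (fun _ => (1:ℝ)))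
    · apply Filter.Eventually.of_forall
      intro p
      have : (fun y => Set.indicator K (fun _ => (1:ℝ)) (Gf p y))
          = Set.indicator (Gf p ⁻¹' K) (fun _ => (1:ℝ)) := by
        ext y
        exact (Set.indicator_comp_right (Gf p) (g := fun _ => (1:ℝ))).symm
      rw [this]
      exact (measurable_const.indicator (hKmeas.preimage (hGfmeas p))).aestronglyMeasurable
    · apply Filter.Eventually.of_forall
      intro p
      apply Filter.Eventually.of_forall
      intro y
      by_cases hy : Gf p y ∈ K
      · rw [Set.indicator_of_mem hy, Set.indicator_of_mem (hmemball p y hy)]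
        simp
      · rw [Set.indicator_of_notMem hy]
        simp only [norm_zero]
        apply Set.indicator_apply_nonneg
        intro; norm_num
    · exact hbound1Int
    · filter_upwards [hae] with y hy
      by_cases hmem : G₀ y ∈ interior K
      · have hev : ∀ᶠ p in nhds p₀, Gf p y ∈ interior K :=
          (hjoint y).eventually (isOpen_interior.mem_nhds hmem)
        apply continuousAt_const.congr
        filter_upwards [hev] with p hp
        rw [Set.indicator_of_mem (interior_subset hp)]
      · have hnotK : G₀ y ∉ K := by
          intro hK
          exact hy ⟨subset_closure hK, hmem⟩
        have hev : ∀ᶠ p in nhds p₀, Gf p y ∉ K := by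
          have hopen : IsOpen (Kᶜ) := hKcomp.isClosed.isOpen_compl
          have := (hjoint y).eventually (hopen.mem_nhds hnotK)
          filter_upwards [this] with p hp
          exact hp
        apply continuousAt_const.congr
        filter_upwards [hev] with p hp
        rw [Set.indicator_of_notMem hp]
  -- continuity of the vector integral
  have hIcont : ContinuousAt If p₀ := by
    apply continuousAt_of_dominated (bound := Set.indicator
        (Metric.closedBall (0 : EuclideanSpace ℝ (Fin n)) R) (fun _ => R))
    · apply Filter.Eventually.of_forall
      intro p
      have : (fun y => Set.indicator K id (Gf p y))
          = Set.indicator (Gf p ⁻¹' K) (Gf p) := by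
        funext y
        have h := Set.indicator_comp_right (s := K) (Gf p) (g := id) (x := y)
        simpa using h.symm
      rw [this]
      exact ((hGfmeas p).indicator (hKmeas.preimage (hGfmeas p))).aestronglyMeasurable
    · apply Filter.Eventually.of_forall
      intro p
      apply Filter.Eventually.of_forall
      intro y
      by_cases hy : Gf p y ∈ K
      · rw [Set.indicator_of_mem hy, Set.indicator_of_mem (hmemball p y hy)]
        exact hinK_norm _ hy
      · rw [Set.indicator_of_notMem hy]
        simp only [norm_zero]
        apply Set.indicator_apply_nonneg
        intro; exact hR0
    · exact hboundInt
    · filter_upwards [hae] with y hy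
      by_cases hmem : G₀ y ∈ interior K
      · have hev : ∀ᶠ p in nhds p₀, Gf p y ∈ interior K :=
          (hjoint y).eventually (isOpen_interior.mem_nhds hmem)
        apply (hjoint y).congr
        filter_upwards [hev] with p hp
        rw [Set.indicator_of_mem (interior_subset hp)]
        rfl
      · have hnotK : G₀ y ∉ K := fun hK => hy ⟨subset_closure hK, hmem⟩
        have hev : ∀ᶠ p in nhds p₀, Gf p y ∉ K := by
          have hopen : IsOpen (Kᶜ) := hKcomp.isClosed.isOpen_compl
          filter_upwards [(hjoint y).eventually (hopen.mem_nhds hnotK)] with p hp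
          exact hp
        apply continuousAt_const.congr
        filter_upwards [hev] with p hp
        rw [Set.indicator_of_notMem hp]
  -- identification of Af and If
  have hAeq : ∀ p : EuclideanSpace ℝ (Fin m) × ℝ,
      Af p = (μF (Gf p ⁻¹' K)).toReal := by
    intro p
    have h1 : (fun y => Set.indicator K (fun _ => (1:ℝ)) (Gf p y))
        = Set.indicator (Gf p ⁻¹' K) (fun _ => (1:ℝ)) := by
      ext y
      exact (Set.indicator_comp_right (Gf p) (g := fun _ => (1:ℝ))).symm
    show (∫ y, Set.indicator K (fun _ => (1:ℝ)) (Gf p y) ∂μF) = _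
    rw [h1]
    exact MeasureTheory.integral_indicator_one (hKmeas.preimage (hGfmeas p))
  have hIeq : ∀ p : EuclideanSpace ℝ (Fin m) × ℝ,
      If p = ∫ y in Gf p ⁻¹' K, Gf p y ∂μF := by
    intro p
    have h1 : (fun y => Set.indicator K id (Gf p y))
        = Set.indicator (Gf p ⁻¹' K) (Gf p) := by
      funext y
      have h := Set.indicator_comp_right (s := K) (Gf p) (g := id) (x := y)
      simpa using h.symm
    show (∫ y, Set.indicator K id (Gf p y) ∂μF) = _
    rw [h1]
    exact MeasureTheory.integral_indicator (hKmeas.preimage (hGfmeas p))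
  -- positivity of the denominator at p₀
  have hA0 : Af p₀ ≠ 0 := by
    rw [hAeq p₀]
    have hD₀meas : MeasurableSet D₀ := hKmeas.preimage (hGfmeas p₀)
    obtain ⟨q, hq⟩ := graphMap_surj hL hLr hw₀
      (by rw [ha₀]; norm_num : (⟪w₀, w₀⟫ : ℝ) ≠ 0) hx₀H
    have hGq : G₀ q ∈ interior K := by
      show graphMap L w₀ p₀.1 p₀.2 q ∈ interior K
      rw [hq]; exact hx₀int
    have hopen : IsOpen (G₀ ⁻¹' interior K) := isOpen_interior.preimage (hGfcont p₀)
    have hpos : 0 < μF (Gf p₀ ⁻¹' K) :=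
      lt_of_lt_of_le (hopen.measure_pos μF ⟨q, hGq⟩)
        (measure_mono (Set.preimage_mono interior_subset))
    have hfin : μF (Gf p₀ ⁻¹' K) < ⊤ := by
      apply lt_of_le_of_lt (measure_mono ?_) hBallcomp.measure_lt_top
      intro y hy
      exact hmemball p₀ y hy
    exact (ENNReal.toReal_pos hpos.ne' hfin.ne).ne'
  -- eventual non-vanishing of the inner product
  have haev : ∀ᶠ p : EuclideanSpace ℝ (Fin m) × ℝ in nhdsWithin p₀ S, (⟪w₀, p.1⟫ : ℝ) ≠ 0 := by
    apply Filter.Eventually.filter_mono nhdsWithin_le_nhds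
    apply ContinuousAt.eventually_ne ((continuous_const.inner continuous_fst).continuousAt)
    show (⟪w₀, w₀⟫ : ℝ) ≠ 0
    rw [ha₀]; norm_num
  -- assembly
  have hcontAt : ContinuousAt (fun p => (Af p)⁻¹ • If p) p₀ := (hAcont.inv₀ hA0).smul hIcont
  apply hcontAt.continuousWithinAt.congr_of_eventuallyEq
  · filter_upwards [self_mem_nhdsWithin, haev] with p hpS hpa
    have hpw : ‖p.1‖ = 1 := mem_sphere_zero_iff_norm.mp hpS.1
    rw [centerOfMass_eq_graph m n hmn K hKmeas L w₀ p.1 p.2 hL hLr hw₀ hpw hpa,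
      hAeq p, hIeq p]
  · have hpa₀ : (⟪w₀, p₀.1⟫ : ℝ) ≠ 0 := by
      show (⟪w₀, w₀⟫ : ℝ) ≠ 0
      rw [ha₀]; norm_num
    rw [centerOfMass_eq_graph m n hmn K hKmeas L w₀ p₀.1 p₀.2 hL hLr hw₀ hw₀ hpa₀,
      hAeq p₀, hIeq p₀]

/-- For a convex body `K ⊆ ℝ^m`: the center of mass of a hyperplane section
`K ∩ H_{w,t}` meeting the interior of `K` lies in the interior of `K`, and it
depends continuously on `(w, t) ∈ S^{m-1} × ℝ` in the range where `H_{w,t}` meets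
the interior of `K`. -/
theorem centerOfMass_mem_interior_and_continuousOn
    (m : ℕ) (hm : 2 ≤ m) (K : Set (EuclideanSpace ℝ (Fin m)))
    (hKcomp : IsCompact K) (hKconv : Convex ℝ K) (hKint : (interior K).Nonempty) :
    (∀ (w : EuclideanSpace ℝ (Fin m)) (t : ℝ), w ∈ Metric.sphere (0 : EuclideanSpace ℝ (Fin m)) 1 →
      (hyperplane m w t ∩ interior K).Nonempty →
      centerOfMass m K (hyperplane m w t) ∈ interior K) ∧
    ContinuousOn (fun p : EuclideanSpace ℝ (Fin m) × ℝ =>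
        centerOfMass m K (hyperplane m p.1 p.2))
      {p : EuclideanSpace ℝ (Fin m) × ℝ |
        p.1 ∈ Metric.sphere (0 : EuclideanSpace ℝ (Fin m)) 1 ∧
        (hyperplane m p.1 p.2 ∩ interior K).Nonempty} := by
  have hmn : m = (m - 1) + 1 := by omega
  constructor
  · intro w t hwsph hne
    exact part1 m (m - 1) hmn K hKcomp hKconv w t (mem_sphere_zero_iff_norm.mp hwsph) hne
  · exact part2 m (m - 1) hmn K hKcomp hKconv
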